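/- Let G be a connected graph of order n ≥ 2 and let H be any graph of order m ≥ 1. Then sdim_f(G ⊙ H) = nm/2. -/

import Mathlib

open SimpleGraph

/-- `Sset G x y` is the set `S{x,y}` of vertices `z` such that `x` lies on some shortest
`y`–`z` path or `y` lies on some shortest `x`–`z` path in `G`. -/
def Sset {V : Type*} (G : SimpleGraph V) (x y : V) : Set V :=
  {z | (∃ p : G.Walk y z, p.length = G.dist y z ∧ x ∈ p.support) ∨
       (∃ p : G.Walk x z, p.length = G.dist x z ∧ y ∈ p.support)}

/-- A strong resolving function of `G`: `g : V → [0,1]` with `g(S{x,y}) ≥ 1` for all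
distinct vertices `x, y`. -/
def IsSRF {V : Type*} (G : SimpleGraph V) (g : V → ℝ) : Prop :=
  (∀ v, 0 ≤ g v ∧ g v ≤ 1) ∧ ∀ x y : V, x ≠ y → 1 ≤ ∑ᶠ z ∈ Sset G x y, g z

/-- The fractional strong metric dimension of `G`. -/
noncomputable def sdimf {V : Type*} (G : SimpleGraph V) : ℝ :=
  sInf {s : ℝ | ∃ g : V → ℝ, IsSRF G g ∧ s = ∑ᶠ v, g v}

/-- A strong resolving set of `G`: every pair of distinct vertices is strongly resolved
by some vertex of `S` (i.e. some vertex of `S` lies in `S{x,y}`). -/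
def IsSRSet {V : Type*} (G : SimpleGraph V) (S : Set V) : Prop :=
  ∀ x y : V, x ≠ y → ∃ z ∈ S, z ∈ Sset G x y

/-- The strong metric dimension of `G`: the minimum cardinality of a strong resolving set. -/
noncomputable def sdim {V : Type*} (G : SimpleGraph V) : ℕ :=
  sInf {n : ℕ | ∃ S : Set V, IsSRSet G S ∧ S.ncard = n}

/-- `u` is maximally distant from `v`: `d(u,v) ≥ d(w,v)` for every neighbor `w` of `u`. -/
def MaxDistFrom {V : Type*} (G : SimpleGraph V) (u v : V) : Prop :=
  ∀ w : V, G.Adj u w → G.dist w v ≤ G.dist u v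

/-- `u` and `v` are mutually maximally distant (MMD) in `G`. -/
def MMD {V : Type*} (G : SimpleGraph V) (u v : V) : Prop :=
  u ≠ v ∧ MaxDistFrom G u v ∧ MaxDistFrom G v u

/-- The strong resolving graph of `G` (on the ambient vertex set): `u ~ v` iff `u` MMD `v`. -/
def SRGraph {V : Type*} (G : SimpleGraph V) : SimpleGraph V where
  Adj := MMD G
  symm := ⟨fun _ _ h => ⟨h.1.symm, h.2.2, h.2.1⟩⟩
  loopless := ⟨fun _ h => h.1 rfl⟩

/-- `M(G)`: the set of vertices that are mutually maximally distant with some vertex. -/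
def Mset {V : Type*} (G : SimpleGraph V) : Set V := {x | ∃ y, MMD G x y}

/-- The matching number of `G`. -/
noncomputable def matchNum {V : Type*} (G : SimpleGraph V) : ℕ :=
  sSup {n : ℕ | ∃ M : G.Subgraph, M.IsMatching ∧ M.edgeSet.ncard = n}

/-- The corona product `G ⊙ H`. -/
def corona {V W : Type*} (G : SimpleGraph V) (H : SimpleGraph W) :
    SimpleGraph (V ⊕ V × W) where
  Adj x y :=
    match x, y with
    | Sum.inl u, Sum.inl u' => G.Adj u u'
    | Sum.inl u, Sum.inr iw => u = iw.1
    | Sum.inr iw, Sum.inl u => iw.1 = u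
    | Sum.inr iw, Sum.inr iw' => iw.1 = iw'.1 ∧ H.Adj iw.2 iw'.2
  symm := by
    constructor
    rintro (u | iw) (u' | iw') h
    · exact G.symm.symm _ _ h
    · exact h.symm
    · exact h.symm
    · exact ⟨h.1.symm, H.symm.symm _ _ h.2⟩
  loopless := by
    constructor
    rintro (u | iw) h
    · exact G.loopless.irrefl u h
    · exact H.loopless.irrefl iw.2 h.2

/-- `K₁ ⊙ H`: the graph obtained from `H` by adding one new vertex adjacent to every
vertex of `H`. -/
def cone {W : Type*} (H : SimpleGraph W) : SimpleGraph (Option W) where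
  Adj x y :=
    match x, y with
    | none, none => False
    | none, some _ => True
    | some _, none => True
    | some w, some w' => H.Adj w w'
  symm := by
    constructor
    rintro (_ | w) (_ | w') h
    · exact h
    · exact trivial
    · exact trivial
    · exact H.symm.symm _ _ h
  loopless := by
    constructor
    rintro (_ | w) h
    · exact h
    · exact H.loopless.irrefl w h

/-- The lexicographic product `G[H]`. -/
def lexProd {V W : Type*} (G : SimpleGraph V) (H : SimpleGraph W) :
    SimpleGraph (V × W) where
  Adj x y := G.Adj x.1 y.1 ∨ (x.1 = y.1 ∧ H.Adj x.2 y.2)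
  symm := by
    constructor
    rintro x y (h | ⟨h1, h2⟩)
    · exact Or.inl (G.symm.symm _ _ h)
    · exact Or.inr ⟨h1.symm, H.symm.symm _ _ h2⟩
  loopless := by
    constructor
    rintro x (h | ⟨_, h2⟩)
    · exact G.loopless.irrefl x.1 h
    · exact H.loopless.irrefl x.2 h2

/-- `SL{x,y} = (N[x] ∪ N[y]) ∩ S{x,y}`. -/
def SLset {W : Type*} (H : SimpleGraph W) (x y : W) : Set W :=
  (insert x (H.neighborSet x) ∪ insert y (H.neighborSet y)) ∩ Sset H x y

/-- A strong locating function of `H`. -/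
def IsSLF {W : Type*} (H : SimpleGraph W) (f : W → ℝ) : Prop :=
  (∀ v, 0 ≤ f v ∧ f v ≤ 1) ∧ ∀ x y : W, x ≠ y → 1 ≤ ∑ᶠ z ∈ SLset H x y, f z

/-- `sl_f(H)`: the minimum weight of a strong locating function of `H`. -/
noncomputable def slf {W : Type*} (H : SimpleGraph W) : ℝ :=
  sInf {s : ℝ | ∃ f : W → ℝ, IsSLF H f ∧ s = ∑ᶠ v, f v}

/-- `u` has a true twin: some other vertex with the same closed neighborhood. -/
def HasTrueTwin {V : Type*} (G : SimpleGraph V) (u : V) : Prop :=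
  ∃ v : V, v ≠ u ∧ insert v (G.neighborSet v) = insert u (G.neighborSet u)

/-- `u` has a false twin: some other vertex with the same open neighborhood. -/
def HasFalseTwin {V : Type*} (G : SimpleGraph V) (u : V) : Prop :=
  ∃ v : V, v ≠ u ∧ G.neighborSet v = G.neighborSet u

/-- `m₁(G)`: number of vertices in type-1 (singleton) classes of the twin relation. -/
noncomputable def m1 {V : Type*} (G : SimpleGraph V) : ℕ :=
  {u : V | ¬ HasTrueTwin G u ∧ ¬ HasFalseTwin G u}.ncard

/-- `m₂(G)`: number of vertices in type-2 (clique) classes of the twin relation. -/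
noncomputable def m2 {V : Type*} (G : SimpleGraph V) : ℕ :=
  {u : V | HasTrueTwin G u}.ncard

/-- `m₃(G)`: number of vertices in type-3 (independent set) classes of the twin relation. -/
noncomputable def m3 {V : Type*} (G : SimpleGraph V) : ℕ :=
  {u : V | HasFalseTwin G u}.ncard

/-- The strong resolving graph of `G` (whose vertex set is `M(G)`) is Hamiltonian:
there is a cycle in `SRGraph G` passing through every vertex of `M(G)`. -/
def SRHamiltonian {V : Type*} (G : SimpleGraph V) : Prop :=
  ∃ (u : V) (p : (SRGraph G).Walk u u), p.IsCycle ∧ ∀ v ∈ Mset G, v ∈ p.support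

/-!
In `G ⊙ H` a pendant copy `H_i` is reached from outside only through `u_i`, so a vertex of `H_i`
never lies strictly inside a shortest path between vertices outside `H_i`. Hence for `x ∈ H_i`,
`y ∈ H_j` with `i ≠ j` we get `S{x,y} = {x,y}`, and a strong resolving function must satisfy
`g x + g y ≥ 1`; summing over the pairs `(i,w), (σ i,w)` for a fixed-point-free permutation `σ`
of `V(G)` gives `g(V) ≥ nm/2`. Conversely every `S{x,y}` contains two vertices of the copies
(the endpoints, or pendant vertices behind `u_i` and `u_j`), so weight `1/2` on every copy vertex
and `0` on `G` is strongly resolving.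
-/

section Sset

variable {U : Type*} {Γ : SimpleGraph U} {x y z : U}

lemma Sset_comm (Γ : SimpleGraph U) (x y : U) : Sset Γ x y = Sset Γ y x := by
  ext z
  exact or_comm

lemma left_mem_Sset (h : Γ.Reachable y x) : x ∈ Sset Γ x y := by
  obtain ⟨p, hp⟩ := h.exists_walk_length_eq_dist
  exact Or.inl ⟨p, hp, p.end_mem_support⟩

lemma right_mem_Sset (h : Γ.Reachable x y) : y ∈ Sset Γ x y := by
  obtain ⟨p, hp⟩ := h.exists_walk_length_eq_dist
  exact Or.inr ⟨p, hp, p.end_mem_support⟩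

lemma mem_Sset_of_dist_eq (hxy : Γ.Reachable x y) (hyz : Γ.Reachable y z)
    (hd : Γ.dist x z = Γ.dist x y + Γ.dist y z) : z ∈ Sset Γ x y := by
  obtain ⟨p, hp⟩ := hxy.exists_walk_length_eq_dist
  obtain ⟨q, hq⟩ := hyz.exists_walk_length_eq_dist
  refine Or.inr ⟨p.append q, by rw [Walk.length_append, hp, hq, hd], ?_⟩
  exact Walk.mem_support_append_iff _ _ |>.mpr (Or.inl p.end_mem_support)

lemma dist_add_dist_le_length [DecidableEq U] {u v : U} (p : Γ.Walk u v) (hx : x ∈ p.support) :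
    Γ.dist u x + Γ.dist x v ≤ p.length := by
  rw [← p.take_spec hx, Walk.length_append]
  exact add_le_add (dist_le _) (dist_le _)

lemma dist_add_dist_le_of_mem_Sset (hz : z ∈ Sset Γ x y) :
    Γ.dist y x + Γ.dist x z ≤ Γ.dist y z ∨ Γ.dist x y + Γ.dist y z ≤ Γ.dist x z := by
  classical
  rcases hz with ⟨p, hp, hx⟩ | ⟨p, hp, hy⟩
  · exact Or.inl (hp ▸ dist_add_dist_le_length p hx)
  · exact Or.inr (hp ▸ dist_add_dist_le_length p hy)

end Sset

lemma add_le_finsum_mem {α : Type*} {S : Set α} (hS : S.Finite) {g : α → ℝ}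
    (hg : ∀ z ∈ S, 0 ≤ g z) {a b : α} (ha : a ∈ S) (hb : b ∈ S) (hab : a ≠ b) :
    g a + g b ≤ ∑ᶠ z ∈ S, g z := by
  rw [← finsum_mem_pair hab, ← finsum_mem_add_sdiff (Set.pair_subset ha hb) hS]
  exact le_add_of_nonneg_right (finsum_nonneg fun z => finsum_nonneg fun hz => hg z hz.1)

lemma card_mul_le_two_mul_sum {α : Type*} [Fintype α] (f : α → ℝ) (σ : Equiv.Perm α) {c : ℝ}
    (h : ∀ a, c ≤ f a + f (σ a)) : Fintype.card α * c ≤ 2 * ∑ a, f a :=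
  calc Fintype.card α * c = ∑ _a : α, c := by simp
    _ ≤ ∑ a, (f a + f (σ a)) := Finset.sum_le_sum fun a _ => h a
    _ = 2 * ∑ a, f a := by rw [Finset.sum_add_distrib, Equiv.sum_comp σ f]; ring

lemma exists_perm_forall_ne (α : Type*) [Fintype α] [Nontrivial α] :
    ∃ σ : Equiv.Perm α, ∀ a, σ a ≠ a := by
  let e := Fintype.equivFin α
  have hrot : ∀ i, finRotate (Fintype.card α) i ≠ i := fun i =>
    Equiv.Perm.mem_support.mp <| by
      rw [support_finRotate_of_le (Fintype.one_lt_card_iff_nontrivial.mpr ‹_›)]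
      exact Finset.mem_univ i
  refine ⟨(e.trans (finRotate _)).trans e.symm, fun a h => hrot (e a) ?_⟩
  simpa [Equiv.symm_apply_eq] using h

section Corona

open Sum

variable {V W : Type*} {G : SimpleGraph V} {H : SimpleGraph W}

lemma corona_adj_inl_inr (i : V) (w : W) : (corona G H).Adj (inl i) (inr (i, w)) := rfl

variable (H) in
lemma corona_reachable_inl (hG : G.Connected) (i j : V) :
    (corona G H).Reachable (inl i) (inl j) :=
  (hG.preconnected i j).map ⟨inl, id⟩

lemma corona_connected (hG : G.Connected) : (corona G H).Connected := by
  have := hG.nonempty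
  have inr_reach (i : V) (w : W) : (corona G H).Reachable (inl i) (inr (i, w)) :=
    (corona_adj_inl_inr i w).reachable
  refine ⟨?_⟩
  rintro (i | ⟨i, w⟩) (j | ⟨j, w'⟩)
  · exact corona_reachable_inl H hG i j
  · exact (corona_reachable_inl H hG i j).trans (inr_reach j w')
  · exact (inr_reach i w).symm.trans (corona_reachable_inl H hG i j)
  · exact ((inr_reach i w).symm.trans (corona_reachable_inl H hG i j)).trans (inr_reach j w')

/-- The copy `H_k` is attached to the rest of `G ⊙ H` only through `u_k`. -/
lemma one_add_dist_le_length_of_walk_from_copy {k : V} {a x : V ⊕ V × W}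
    (p : (corona G H).Walk a x) (ha : ∃ w, a = inr (k, w)) (hx : ∀ w, x ≠ inr (k, w)) :
    1 + (corona G H).dist (inl k) x ≤ p.length := by
  induction p with
  | nil =>
    obtain ⟨w, rfl⟩ := ha
    exact absurd rfl (hx w)
  | @cons _ c _ hadj q ih =>
    obtain ⟨w, rfl⟩ := ha
    rw [Walk.length_cons]
    match c, hadj with
    | inl _, rfl =>
      have := dist_le q
      dsimp only at this
      omega
    | inr (_, w'), ⟨rfl, _⟩ => exact (ih ⟨w', rfl⟩ hx).trans (Nat.le_succ _)

lemma corona_dist_inr (hG : G.Connected) {k : V} {x : V ⊕ V × W} (hx : ∀ w, x ≠ inr (k, w))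
    (w : W) : (corona G H).dist x (inr (k, w)) = (corona G H).dist x (inl k) + 1 := by
  refine le_antisymm ?_ ?_
  · calc (corona G H).dist x (inr (k, w))
        ≤ (corona G H).dist x (inl k) + (corona G H).dist (inl k) (inr (k, w)) :=
          (corona_connected hG).dist_triangle
      _ = (corona G H).dist x (inl k) + 1 := by
          rw [dist_eq_one_iff_adj.mpr (corona_adj_inl_inr k w)]
  · obtain ⟨p, hp⟩ := (corona_connected (H := H) hG).exists_walk_length_eq_dist (inr (k, w)) x
    have := one_add_dist_le_length_of_walk_from_copy p ⟨w, rfl⟩ hx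
    rw [hp] at this
    rw [SimpleGraph.dist_comm (u := x), SimpleGraph.dist_comm (u := x)]
    omega

lemma corona_dist_inl_le_dist_inr (hG : G.Connected) {i : V} {w : W} {z : V ⊕ V × W}
    (hz : z ≠ inr (i, w)) :
    (corona G H).dist (inl i) z ≤ (corona G H).dist (inr (i, w)) z := by
  by_cases hcopy : ∃ w', z = inr (i, w')
  · obtain ⟨w', rfl⟩ := hcopy
    rw [dist_eq_one_iff_adj.mpr (corona_adj_inl_inr i w')]
    exact (corona_connected hG).pos_dist_of_ne hz.symm
  · simp only [not_exists] at hcopy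
    rw [SimpleGraph.dist_comm, SimpleGraph.dist_comm (u := inr (i, w)), corona_dist_inr hG hcopy]
    omega

/-- A vertex of `H_i` is a dead end for shortest paths coming from outside `H_i`. -/
lemma corona_eq_of_dist_add_dist_le (hG : G.Connected) {i : V} {w : W} {y z : V ⊕ V × W}
    (hy : ∀ w', y ≠ inr (i, w'))
    (h : (corona G H).dist y (inr (i, w)) + (corona G H).dist (inr (i, w)) z ≤
      (corona G H).dist y z) :
    z = inr (i, w) := by
  by_contra hz
  have hyx := corona_dist_inr (H := H) hG hy w
  have hxz := corona_dist_inl_le_dist_inr (H := H) hG hz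
  have htri : (corona G H).dist y z ≤ (corona G H).dist y (inl i) + (corona G H).dist (inl i) z :=
    (corona_connected hG).dist_triangle
  omega

lemma corona_Sset_inr_inr (hG : G.Connected) {i j : V} (hij : i ≠ j) (w w' : W) :
    Sset (corona G H) (inr (i, w)) (inr (j, w')) = {inr (i, w), inr (j, w')} := by
  have hC := corona_connected (H := H) hG
  refine Set.Subset.antisymm (fun z hz => ?_) ?_
  · rcases dist_add_dist_le_of_mem_Sset hz with h | h
    · exact Or.inl (corona_eq_of_dist_add_dist_le hG (by simp [hij.symm]) h)
    · exact Or.inr (corona_eq_of_dist_add_dist_le hG (by simp [hij]) h)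
  · rintro z (rfl | rfl)
    · exact left_mem_Sset (hC.preconnected _ _)
    · exact right_mem_Sset (hC.preconnected _ _)

lemma corona_inr_mem_Sset_inl (hG : G.Connected) {k : V} {x : V ⊕ V × W}
    (hx : ∀ w, x ≠ inr (k, w)) (w : W) : inr (k, w) ∈ Sset (corona G H) x (inl k) := by
  have hC := corona_connected (H := H) hG
  refine mem_Sset_of_dist_eq (hC.preconnected _ _) (hC.preconnected _ _) ?_
  rw [corona_dist_inr hG hx, dist_eq_one_iff_adj.mpr (corona_adj_inl_inr k w)]

lemma corona_mem_Sset_inr_inl (hG : G.Connected) {i : V} {z : V ⊕ V × W}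
    (hz : ∀ w', z ≠ inr (i, w')) (w : W) : z ∈ Sset (corona G H) (inr (i, w)) (inl i) := by
  have hC := corona_connected (H := H) hG
  refine mem_Sset_of_dist_eq (hC.preconnected _ _) (hC.preconnected _ _) ?_
  rw [SimpleGraph.dist_comm, corona_dist_inr hG hz,
    dist_eq_one_iff_adj.mpr (corona_adj_inl_inr i w).symm, SimpleGraph.dist_comm, add_comm]

lemma corona_exists_inr_ne_mem_Sset_inr_inl [Nontrivial V] [Nonempty W] (hG : G.Connected)
    (i j : V) (w : W) :
    ∃ b : V × W, b ≠ (i, w) ∧ inr b ∈ Sset (corona G H) (inr (i, w)) (inl j) := by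
  obtain ⟨w₀⟩ := ‹Nonempty W›
  by_cases hij : i = j
  · subst hij
    obtain ⟨k, hk⟩ := exists_ne i
    exact ⟨(k, w₀), by simp [hk], corona_mem_Sset_inr_inl hG (by simp [hk]) w⟩
  · exact ⟨(j, w₀), by simp [Ne.symm hij], corona_inr_mem_Sset_inl hG (by simp [hij]) w₀⟩

lemma corona_exists_inr_ne_mem_Sset [Nontrivial V] [Nonempty W] (hG : G.Connected)
    {x y : V ⊕ V × W} (hxy : x ≠ y) :
    ∃ a b : V × W, a ≠ b ∧ inr a ∈ Sset (corona G H) x y ∧ inr b ∈ Sset (corona G H) x y := by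
  have hC := corona_connected (H := H) hG
  obtain ⟨w₀⟩ := ‹Nonempty W›
  rcases x with i | ⟨i, w⟩ <;> rcases y with j | ⟨j, w'⟩
  · have hij : i ≠ j := by simpa using hxy
    refine ⟨(j, w₀), (i, w₀), by simp [hij.symm], ?_, ?_⟩
    · exact corona_inr_mem_Sset_inl hG (by simp) w₀
    · exact Sset_comm _ _ _ ▸ corona_inr_mem_Sset_inl hG (by simp) w₀
  · obtain ⟨b, hb, hmem⟩ := corona_exists_inr_ne_mem_Sset_inr_inl (H := H) hG j i w'
    rw [Sset_comm]
    exact ⟨(j, w'), b, hb.symm, left_mem_Sset (hC.preconnected _ _), hmem⟩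
  · obtain ⟨b, hb, hmem⟩ := corona_exists_inr_ne_mem_Sset_inr_inl (H := H) hG i j w
    exact ⟨(i, w), b, hb.symm, left_mem_Sset (hC.preconnected _ _), hmem⟩
  · exact ⟨(i, w), (j, w'), by simpa using hxy, left_mem_Sset (hC.preconnected _ _),
      right_mem_Sset (hC.preconnected _ _)⟩

variable (V W) in
noncomputable def halfOnCopies : V ⊕ V × W → ℝ := Sum.elim (fun _ => 0) fun _ => 1 / 2

lemma isSRF_halfOnCopies [Finite V] [Finite W] [Nontrivial V] [Nonempty W] (hG : G.Connected) :
    IsSRF (corona G H) (halfOnCopies V W) := by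
  refine ⟨fun v => by rcases v with _ | _ <;> norm_num [halfOnCopies], fun x y hxy => ?_⟩
  obtain ⟨a, b, hab, ha, hb⟩ := corona_exists_inr_ne_mem_Sset (H := H) hG hxy
  calc (1 : ℝ) = halfOnCopies V W (inr a) + halfOnCopies V W (inr b) := by
        norm_num [halfOnCopies]
    _ ≤ _ := add_le_finsum_mem (Set.toFinite _)
        (fun z _ => by rcases z with _ | _ <;> norm_num [halfOnCopies]) ha hb
        (inr_injective.ne hab)

lemma finsum_halfOnCopies [Fintype V] [Fintype W] :
    ∑ᶠ v, halfOnCopies V W v = (Fintype.card V : ℝ) * Fintype.card W / 2 := by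
  rw [finsum_eq_sum_of_fintype, Fintype.sum_sum_type]
  simp only [halfOnCopies, elim_inl, elim_inr, Finset.sum_const_zero, Finset.sum_const,
    Finset.card_univ, Fintype.card_prod, nsmul_eq_mul, Nat.cast_mul, zero_add]
  ring

lemma corona_card_mul_card_div_two_le [Fintype V] [Fintype W] [Nontrivial V] (hG : G.Connected)
    {g : V ⊕ V × W → ℝ} (hg : IsSRF (corona G H) g) :
    (Fintype.card V : ℝ) * Fintype.card W / 2 ≤ ∑ᶠ v, g v := by
  obtain ⟨σ, hσ⟩ := exists_perm_forall_ne V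
  have hpair (p : V × W) : 1 ≤ g (inr p) + g (inr (σ.prodCongr (Equiv.refl W) p)) := by
    obtain ⟨i, w⟩ := p
    have hne : i ≠ σ i := (hσ i).symm
    have := hg.2 (inr (i, w)) (inr (σ i, w)) (by simp [hne])
    rwa [corona_Sset_inr_inr hG hne, finsum_mem_pair (by simp [hne])] at this
  have hcopies := card_mul_le_two_mul_sum (fun p => g (inr p)) _ hpair
  have hbase : 0 ≤ ∑ i, g (inl i) := Finset.sum_nonneg fun i _ => (hg.1 _).1
  rw [Fintype.card_prod, Nat.cast_mul] at hcopies
  rw [finsum_eq_sum_of_fintype, Fintype.sum_sum_type]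
  linarith

end Corona

/-- Let `G` be connected of order `n ≥ 2` and `H` any graph of order
`m ≥ 1`. Then `sdim_f(G ⊙ H) = nm/2`. -/
theorem sdimf_corona {V W : Type*} [Fintype V] [Fintype W]
    (G : SimpleGraph V) (H : SimpleGraph W)
    (hG : G.Connected) (hn : 2 ≤ Fintype.card V) (hm : 1 ≤ Fintype.card W) :
    sdimf (corona G H) = (Fintype.card V : ℝ) * (Fintype.card W : ℝ) / 2 := by
  have : Nontrivial V := Fintype.one_lt_card_iff_nontrivial.mp hn
  have : Nonempty W := Fintype.card_pos_iff.mp hm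
  refine IsLeast.csInf_eq ⟨⟨_, isSRF_halfOnCopies hG, finsum_halfOnCopies.symm⟩, ?_⟩
  rintro _ ⟨g, hg, rfl⟩
  exact corona_card_mul_card_div_two_le hG hg
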